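/- Let Λ = ⊕_{i ≤ 0} Λ^i be a finite-dimensional graded algebra over an algebraically closed field k, concentrated in non-positive degrees, with Jacobson radical J = rad(Λ^0) ⊕ Λ^{<0}. Suppose (m_n)_{n≥2} is a family of k-multilinear maps Λ^{⊗n} → Λ with m_n homogeneous of degree 2-n, m_2 the algebra multiplication, and m_n = 0 for n > n_2 where n_2 = n_0 + 3 and Λ^i = 0 for i < -n_0. Define F^p Λ = Σ_{n ≥ p} Σ_{ψ ∈ Ψ_n} ψ(J^{⊗n}) for p ≥ 1 (and F^0 Λ = Λ), where Ψ_n is the set of n-ary operations obtained by composing the m_i's. Then the decreasing filtration F^* is finite: F^p Λ = 0 for all sufficiently large p. -/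

import Mathlib

/-!
Let `J ^ l = 0`. Give `y` the weight `a + 3 l b` when `y ∈ J ^ a` and `y` is a sum of homogeneous
elements of degree at most `-b`, and filter `Λ` by weight. The product `m₂` adds weights. A higher
operation `m_s`, `s ≥ 3`, may destroy the radical factors of its inputs, fewer than `s l` in all,
but it lowers the degree by `s - 2`, which gains `3 l (s - 2) ≥ s l` in weight. Hence every
`ψ ∈ Ψ_n` maps `J^{⊗n}` into weight `≥ n`, and weight `≥ l + 3 l n₀` is zero because `J ^ l = 0`
and `Λ` vanishes below degree `-n₀`.
-/

/-- `IsOp m n f` : `f` is an `n`-ary operation obtained from the identity by successively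
composing with the operations `m_s` (`s ≥ 2`), i.e. applying `1^{⊗r} ⊗ m_s ⊗ 1^{⊗t}` and
composing; equivalently, `f` is the composite of the `m_s` along a planar rooted tree with
`n` leaves.  Operations are represented as functions `(ℕ → Λ) → Λ` depending only on the
first `n` inputs. -/
inductive IsOp {k Λ : Type*} [Field k] [AddCommGroup Λ] [Module k Λ]
    (m : ∀ n : ℕ, MultilinearMap k (fun _ : Fin n => Λ) Λ) : ℕ → ((ℕ → Λ) → Λ) → Prop
  | id : IsOp m 1 (fun x => x 0)
  | comp (n : ℕ) (f : (ℕ → Λ) → Λ) (hf : IsOp m n f) (r s : ℕ) (hr : r < n) (hs : 2 ≤ s) :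
      IsOp m (n + s - 1) (fun x => f (fun j =>
        if j < r then x j
        else if j = r then m s (fun i : Fin s => x (r + (i : ℕ)))
        else x (j + s - 1)))

open Finset

theorem MultilinearMap.map_mem_of_forall_mem_span {R ι N : Type*} {M : ι → Type*}
    [CommSemiring R] [Fintype ι] [DecidableEq ι] [∀ i, AddCommMonoid (M i)]
    [∀ i, Module R (M i)] [AddCommMonoid N] [Module R N] (f : MultilinearMap R M N)
    (S : ∀ i, Set (M i)) (q : Submodule R N) (h : ∀ v, (∀ i, v i ∈ S i) → f v ∈ q)
    {v : ∀ i, M i} (hv : ∀ i, v i ∈ Submodule.span R (S i)) : f v ∈ q := by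
  suffices key : ∀ T : Finset ι, ∀ v : ∀ i, M i, (∀ i ∈ T, v i ∈ Submodule.span R (S i)) →
      (∀ i ∉ T, v i ∈ S i) → f v ∈ q from
    key univ v (fun i _ => hv i) (fun i hi => absurd (mem_univ i) hi)
  intro T
  induction T using Finset.induction_on with
  | empty => exact fun v _ hS => h v fun i => hS i (notMem_empty i)
  | insert j T hj ih =>
    intro v hspan hS
    have hupdate : ∀ y ∈ Submodule.span R (S j), f (Function.update v j y) ∈ q := by
      intro y hy
      induction hy using Submodule.span_induction with
      | mem z hz =>
        refine ih _ (fun i hi => ?_) (fun i hi => ?_)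
        · rw [Function.update_of_ne (ne_of_mem_of_not_mem hi hj)]
          exact hspan i (mem_insert_of_mem hi)
        · rcases eq_or_ne i j with rfl | hne
          · simpa using hz
          · rw [Function.update_of_ne hne]
            exact hS i (by simp [hne, hi])
      | zero => simpa only [f.map_update_zero] using q.zero_mem
      | add y z _ _ hy hz => simpa only [f.map_update_add] using q.add_mem hy hz
      | smul c y _ hy => simpa only [f.map_update_smul] using q.smul_mem c hy
    simpa using hupdate (v j) (hspan j (mem_insert_self j T))

theorem Ideal.mul_mem_pow_add {R : Type*} [Semiring R] {I : Ideal R} [I.IsTwoSided]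
    {a b : ℕ} {x y : R} (hx : x ∈ I ^ a) (hy : y ∈ I ^ b) : x * y ∈ I ^ (a + b) := by
  rw [Ideal.IsTwoSided.pow_add]
  exact Ideal.mul_mem_mul hx hy

section Grading

variable {R M : Type*} [CommSemiring R] [AddCommMonoid M] [Module R M]

def lowDegree (𝒜 : ℤ → Submodule R M) (b : ℕ) : Submodule R M :=
  Submodule.span R {v | ∃ i : ℤ, i ≤ -(b : ℤ) ∧ v ∈ 𝒜 i}

theorem lowDegree_zero_eq_top (𝒜 : ℤ → Submodule R M) [DirectSum.Decomposition 𝒜]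
    (h𝒜 : ∀ i : ℤ, 0 < i → 𝒜 i = ⊥) : lowDegree 𝒜 0 = ⊤ := by
  refine eq_top_iff.mpr ((DirectSum.Decomposition.isInternal 𝒜).submodule_iSup_eq_top.ge.trans
    (iSup_le fun i v hv => ?_))
  rcases le_or_gt i 0 with hi | hi
  · exact Submodule.subset_span ⟨i, by simpa using hi, hv⟩
  · rw [h𝒜 i hi, Submodule.mem_bot] at hv
    simp [hv]

theorem lowDegree_eq_bot {𝒜 : ℤ → Submodule R M} {n₀ : ℕ}
    (h𝒜 : ∀ i : ℤ, i < -(n₀ : ℤ) → 𝒜 i = ⊥) {b : ℕ} (hb : n₀ < b) : lowDegree 𝒜 b = ⊥ := by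
  refine Submodule.span_eq_bot.mpr ?_
  rintro v ⟨i, hi, hv⟩
  rwa [h𝒜 i (by omega), Submodule.mem_bot] at hv

theorem map_mem_lowDegree {𝒜 : ℤ → Submodule R M} {ι : Type*} [Fintype ι] [DecidableEq ι]
    (μ : MultilinearMap R (fun _ : ι => M) M) (e : ℕ)
    (hμ : ∀ (d : ι → ℤ) (x : ι → M), (∀ i, x i ∈ 𝒜 (d i)) → μ x ∈ 𝒜 (∑ i, d i - e))
    {b : ι → ℕ} {x : ι → M} (hx : ∀ i, x i ∈ lowDegree 𝒜 (b i)) :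
    μ x ∈ lowDegree 𝒜 (∑ i, b i + e) := by
  refine μ.map_mem_of_forall_mem_span _ _ (fun v hv => ?_) hx
  choose d hd hv using hv
  refine Submodule.subset_span ⟨_, ?_, hμ d v hv⟩
  have := sum_le_sum fun i (_ : i ∈ univ) => hd i
  push_cast at this ⊢
  simp only [sum_neg_distrib] at this
  omega

end Grading

section Weight

variable {R Λ : Type*} [CommSemiring R] [Semiring Λ] [Module R Λ]

def weightFiltration (𝒜 : ℤ → Submodule R Λ) (I : Ideal Λ) (C w : ℕ) : Submodule R Λ :=
  Submodule.span R {y | ∃ a b : ℕ, w ≤ a + C * b ∧ y ∈ I ^ a ∧ y ∈ lowDegree 𝒜 b}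

variable {𝒜 : ℤ → Submodule R Λ} {I : Ideal Λ} {C : ℕ} {ι : Type*} [Fintype ι] [DecidableEq ι]
  (μ : MultilinearMap R (fun _ : ι => Λ) Λ) (e : ℕ)

theorem map_mem_weightFiltration_of_map_mem_pow
    (hμ : ∀ (d : ι → ℤ) (x : ι → Λ), (∀ i, x i ∈ 𝒜 (d i)) → μ x ∈ 𝒜 (∑ i, d i - e))
    (hpow : ∀ (a : ι → ℕ) (x : ι → Λ), (∀ i, x i ∈ I ^ a i) → μ x ∈ I ^ ∑ i, a i)
    {w : ι → ℕ} {x : ι → Λ} (hx : ∀ i, x i ∈ weightFiltration 𝒜 I C (w i)) :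
    μ x ∈ weightFiltration 𝒜 I C (∑ i, w i) := by
  refine μ.map_mem_of_forall_mem_span _ _ (fun v hv => ?_) hx
  choose a b hw ha hb using hv
  refine Submodule.subset_span ⟨∑ i, a i, ∑ i, b i + e, ?_, hpow a v ha,
    map_mem_lowDegree μ e hμ hb⟩
  calc ∑ i, w i ≤ ∑ i, (a i + C * b i) := sum_le_sum fun i _ => hw i
    _ = ∑ i, a i + C * ∑ i, b i := by rw [sum_add_distrib, mul_sum]
    _ ≤ ∑ i, a i + C * (∑ i, b i + e) := by gcongr; omega

theorem map_mem_weightFiltration_of_pow_eq_bot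
    (hμ : ∀ (d : ι → ℤ) (x : ι → Λ), (∀ i, x i ∈ 𝒜 (d i)) → μ x ∈ 𝒜 (∑ i, d i - e))
    {l : ℕ} (hI : I ^ l = ⊥) (hC : Fintype.card ι * l ≤ C * e)
    {w : ι → ℕ} {x : ι → Λ} (hx : ∀ i, x i ∈ weightFiltration 𝒜 I C (w i)) :
    μ x ∈ weightFiltration 𝒜 I C (∑ i, w i) := by
  refine μ.map_mem_of_forall_mem_span _ _ (fun v hv => ?_) hx
  choose a b hw ha hb using hv
  by_cases hvanish : ∃ i, l ≤ a i
  · obtain ⟨i, hi⟩ := hvanish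
    have hvi : v i = 0 := by
      simpa [le_bot_iff.mp ((Ideal.pow_le_pow_right hi).trans hI.le)] using ha i
    simp [μ.map_coord_zero i hvi]
  push Not at hvanish
  have hpow : μ v ∈ I ^ 0 := by rw [Submodule.pow_zero, Ideal.one_eq_top]; exact Submodule.mem_top
  refine Submodule.subset_span ⟨0, ∑ i, b i + e, ?_, hpow, map_mem_lowDegree μ e hμ hb⟩
  calc ∑ i, w i ≤ ∑ i, (a i + C * b i) := sum_le_sum fun i _ => hw i
    _ = ∑ i, a i + C * ∑ i, b i := by rw [sum_add_distrib, mul_sum]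
    _ ≤ Fintype.card ι * l + C * ∑ i, b i := by
      gcongr
      simpa using sum_le_sum fun i (_ : i ∈ univ) => (hvanish i).le
    _ ≤ 0 + C * (∑ i, b i + e) := by rw [mul_add]; omega

theorem weightFiltration_eq_bot {n₀ l : ℕ} (h𝒜 : ∀ i : ℤ, i < -(n₀ : ℤ) → 𝒜 i = ⊥)
    (hI : I ^ l = ⊥) {w : ℕ} (hw : l + C * n₀ ≤ w) : weightFiltration 𝒜 I C w = ⊥ := by
  refine Submodule.span_eq_bot.mpr ?_
  rintro y ⟨a, b, hab, ha, hb⟩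
  rcases le_or_gt b n₀ with hbn | hbn
  · have hla : l ≤ a := by nlinarith [Nat.mul_le_mul_left C hbn]
    simpa [le_bot_iff.mp ((Ideal.pow_le_pow_right hla).trans hI.le)] using ha
  · rwa [lowDegree_eq_bot h𝒜 hbn, Submodule.mem_bot] at hb

theorem mem_weightFiltration_one (h𝒜 : lowDegree 𝒜 0 = ⊤) {x : Λ} (hx : x ∈ I) :
    x ∈ weightFiltration 𝒜 I C 1 :=
  Submodule.subset_span ⟨1, 0, by omega, by rwa [Submodule.pow_one], h𝒜 ▸ Submodule.mem_top⟩

end Weight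

theorem sum_range_grouped {M : Type*} [AddCommMonoid M] (w : ℕ → M) {r n : ℕ} (hr : r < n)
    (s : ℕ) : ∑ j ∈ range n, (if j < r then w j else if j = r then ∑ t ∈ range s, w (r + t)
      else w (j + s - 1)) = ∑ i ∈ range (n + s - 1), w i := by
  obtain ⟨q, rfl⟩ := Nat.exists_eq_add_of_lt hr
  rw [show r + q + 1 = r + 1 + q by omega, show r + 1 + q + s - 1 = r + s + q by omega,
    sum_range_add _ (r + 1), sum_range_succ, sum_range_add _ (r + s), sum_range_add _ r]
  have hhead : ∑ j ∈ range r, (if j < r then w j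
      else if j = r then ∑ t ∈ range s, w (r + t) else w (j + s - 1)) = ∑ j ∈ range r, w j :=
    sum_congr rfl fun j hj => if_pos (mem_range.mp hj)
  have htail : ∑ j ∈ range q, (if r + 1 + j < r then w (r + 1 + j)
      else if r + 1 + j = r then ∑ t ∈ range s, w (r + t) else w (r + 1 + j + s - 1)) =
      ∑ j ∈ range q, w (r + s + j) :=
    sum_congr rfl fun j _ => by rw [if_neg (by omega), if_neg (by omega)]; congr 1; omega
  rw [hhead, htail, if_neg (lt_irrefl r), if_pos rfl]

theorem IsOp.mem_of_forall_mem {k Λ : Type*} [Field k] [AddCommGroup Λ] [Module k Λ]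
    {m : ∀ n : ℕ, MultilinearMap k (fun _ : Fin n => Λ) Λ} (V : ℕ → Set Λ)
    (hV : ∀ s, 2 ≤ s → ∀ (w : Fin s → ℕ) (v : Fin s → Λ),
      (∀ i, v i ∈ V (w i)) → m s v ∈ V (∑ i, w i))
    {n : ℕ} {f : (ℕ → Λ) → Λ} (hf : IsOp m n f) (w : ℕ → ℕ) (x : ℕ → Λ)
    (hx : ∀ i < n, x i ∈ V (w i)) : f x ∈ V (∑ i ∈ range n, w i) := by
  induction hf generalizing w x with
  | id => simpa using hx 0 one_pos
  | comp n f _ r s hr hs ih =>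
    rw [← sum_range_grouped w hr s]
    refine ih _ _ fun j hj => ?_
    split_ifs with hlt heq
    · exact hx j (by omega)
    · subst heq
      simpa [Fin.sum_univ_eq_sum_range (fun t => w (j + t))] using
        hV s hs (fun t => w (j + t)) (fun t => x (j + t)) fun t => hx _ (by omega)
    · exact hx _ (by omega)

theorem stmt_14_general (k Λ : Type*) [Field k] [Ring Λ] [Algebra k Λ]
    [FiniteDimensional k Λ]
    (𝒜 : ℤ → Submodule k Λ) [GradedAlgebra 𝒜]
    (n₀ : ℕ) (hvanish : ∀ i : ℤ, (0 < i ∨ i < -(n₀ : ℤ)) → 𝒜 i = ⊥)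
    (m : ∀ n : ℕ, MultilinearMap k (fun _ : Fin n => Λ) Λ)
    (hhom : ∀ (n : ℕ) (d : Fin n → ℤ) (x : ∀ _ : Fin n, Λ), (∀ j, x j ∈ 𝒜 (d j)) →
      m n x ∈ 𝒜 ((∑ j, d j) + (2 - (n : ℤ))))
    (hmul : ∀ x : Fin 2 → Λ, m 2 x = x 0 * x 1)
    (J : Set Λ) (hJ : J = {a : Λ | a ∈ Ideal.jacobson (⊥ : Ideal Λ)})
    (F : ℕ → Submodule k Λ)
    (hF : ∀ p : ℕ, 1 ≤ p → F p = Submodule.span k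
      {y : Λ | ∃ n : ℕ, p ≤ n ∧ ∃ f : (ℕ → Λ) → Λ, IsOp m n f ∧
        ∃ x : ℕ → Λ, (∀ i, x i ∈ J) ∧ y = f x}) :
    ∃ p₀ : ℕ, ∀ p : ℕ, p₀ ≤ p → F p = ⊥ := by
  subst hJ
  have := IsArtinianRing.of_finite k Λ
  obtain ⟨l, hl⟩ := IsArtinianRing.isNilpotent_jacobson_bot (R := Λ)
  set V := weightFiltration 𝒜 (⊥ : Ideal Λ).jacobson (3 * l)
  have hdeg : ∀ s, 2 ≤ s → ∀ (d : Fin s → ℤ) (x : Fin s → Λ), (∀ j, x j ∈ 𝒜 (d j)) →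
      m s x ∈ 𝒜 (∑ j, d j - (s - 2 : ℕ)) := by
    intro s hs d x hx
    convert hhom s d x hx using 2
    omega
  have hV : ∀ s, 2 ≤ s → ∀ (w : Fin s → ℕ) (v : Fin s → Λ),
      (∀ i, v i ∈ (V (w i) : Set Λ)) → m s v ∈ (V (∑ i, w i) : Set Λ) := by
    intro s hs w v hv
    obtain rfl | hs := hs.eq_or_lt
    · refine map_mem_weightFiltration_of_map_mem_pow _ _ (hdeg 2 le_rfl) (fun a x hx => ?_) hv
      rw [hmul, Fin.sum_univ_two]
      exact Ideal.mul_mem_pow_add (hx 0) (hx 1)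
    · refine map_mem_weightFiltration_of_pow_eq_bot _ (s - 2) (hdeg s hs.le) hl ?_ hv
      rw [Fintype.card_fin]
      nlinarith [Nat.mul_le_mul_right l (show s ≤ 3 * (s - 2) by omega)]
  refine ⟨l + 3 * l * n₀ + 1, fun p hp => ?_⟩
  rw [hF p (by omega), Submodule.span_eq_bot]
  rintro _ ⟨n, hn, f, hf, x, hx, rfl⟩
  have hfx := hf.mem_of_forall_mem (fun w => V w) hV (fun _ => 1) x fun i _ =>
    mem_weightFiltration_one (lowDegree_zero_eq_top 𝒜 fun i hi => hvanish i (Or.inl hi))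
      (hx i)
  simpa [V, weightFiltration_eq_bot (fun i hi => hvanish i (Or.inr hi)) hl
    (show l + 3 * l * n₀ ≤ n by omega)] using hfx

/-- Let `Λ` be a finite-dimensional graded algebra over an algebraically
closed field `k`, concentrated in degrees in `[-n₀, 0]`, with Jacobson radical `J`.
Suppose `(mₙ)` is a family of `k`-multilinear maps `Λ^{⊗n} → Λ`, with `mₙ` homogeneous of
degree `2 - n`, `m₂` the multiplication, and `mₙ = 0` for `n > n₀ + 3`.  Define
`F^p Λ = Σ_{n ≥ p} Σ_{ψ ∈ Ψ_n} ψ(J^{⊗n})` for `p ≥ 1`, where `Ψ_n` is the set of `n`-ary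
composites of the `mᵢ`.  Then the decreasing filtration `F^*` is finite: `F^p Λ = 0` for all
sufficiently large `p`. -/
theorem stmt_14 (k Λ : Type*) [Field k] [IsAlgClosed k] [Ring Λ] [Algebra k Λ]
    [FiniteDimensional k Λ]
    (𝒜 : ℤ → Submodule k Λ) [GradedAlgebra 𝒜]
    (n₀ : ℕ) (hvanish : ∀ i : ℤ, (0 < i ∨ i < -(n₀ : ℤ)) → 𝒜 i = ⊥)
    (m : ∀ n : ℕ, MultilinearMap k (fun _ : Fin n => Λ) Λ)
    (hhom : ∀ (n : ℕ) (d : Fin n → ℤ) (x : ∀ _ : Fin n, Λ), (∀ j, x j ∈ 𝒜 (d j)) →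
      m n x ∈ 𝒜 ((∑ j, d j) + (2 - (n : ℤ))))
    (hmul : ∀ x : Fin 2 → Λ, m 2 x = x 0 * x 1)
    (hzero : ∀ n : ℕ, n > n₀ + 3 → m n = 0)
    (J : Set Λ) (hJ : J = {a : Λ | a ∈ Ideal.jacobson (⊥ : Ideal Λ)})
    (F : ℕ → Submodule k Λ)
    (hF : ∀ p : ℕ, 1 ≤ p → F p = Submodule.span k
      {y : Λ | ∃ n : ℕ, p ≤ n ∧ ∃ f : (ℕ → Λ) → Λ, IsOp m n f ∧
        ∃ x : ℕ → Λ, (∀ i, x i ∈ J) ∧ y = f x}) :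
    ∃ p₀ : ℕ, ∀ p : ℕ, p₀ ≤ p → F p = ⊥ :=
  stmt_14_general k Λ 𝒜 n₀ hvanish m hhom hmul J hJ F hF
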